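/- arXiv:2209.07437 — 3 statements merged into one kernel-verified Lean document; each statement's English description precedes it below -/
import Mathlib

section
/- Let X_{mn} for m in {1,...,M}, n in {1,...,N} be random variables in [0,1] such that for each m, the family {X_{mn}}_{n} is independent, and for each n, the sum over m of E[X_{mn}] is at most 1. Then the sum over m of E|sum_{n=1}^N (X_{mn} - E[X_{mn}])| is at most sqrt(M*N). -/
open MeasureTheory ProbabilityTheory

/-- Cauchy–Schwarz: `E|Z| ≤ √(E Z²)` on a probability space. -/
lemma my_abs_int_le {Ω : Type*} [MeasureSpace Ω] [IsProbabilityMeasure (ℙ : Measure Ω)]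
    (Z : Ω → ℝ) (hZ : MemLp Z 2 ℙ) :
    ∫ ω, |Z ω| ≤ Real.sqrt (∫ ω, (Z ω) ^ 2) := by
  have h1 : MemLp Z 1 ℙ := hZ.mono_exponent one_le_two
  have hle := eLpNorm_le_eLpNorm_of_exponent_le (μ := ℙ) (p := 1) (q := 2) one_le_two
    hZ.aestronglyMeasurable
  rw [hZ.eLpNorm_eq_integral_rpow_norm two_ne_zero ENNReal.ofNat_ne_top,
      h1.eLpNorm_eq_integral_rpow_norm one_ne_zero ENNReal.one_ne_top] at hle
  simp only [ENNReal.toReal_one, ENNReal.toReal_ofNat, Real.rpow_one, inv_one] at hle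
  rw [ENNReal.ofReal_le_ofReal_iff (by positivity)] at hle
  calc ∫ ω, |Z ω| = ∫ ω, ‖Z ω‖ := by simp [Real.norm_eq_abs]
    _ ≤ (∫ ω, ‖Z ω‖ ^ (2 : ℝ)) ^ (2 : ℝ)⁻¹ := hle
    _ = Real.sqrt (∫ ω, (Z ω) ^ 2) := by
        rw [Real.sqrt_eq_rpow, one_div]
        congr 1
        refine integral_congr_ae (ae_of_all _ fun ω => ?_)
        simp [Real.rpow_two, Real.norm_eq_abs, sq_abs]

/-- Lemma 7: if for each `m` the family `{X_{mn}}_n` is independent, each variable lies in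
`[0,1]`, and for each `n` we have `∑_m E[X_{mn}] ≤ 1`, then
`∑_m E|∑_n (X_{mn} - E X_{mn})| ≤ √(M N)`. -/
theorem stmt_0 {Ω : Type*} [MeasureSpace Ω] [IsProbabilityMeasure (ℙ : Measure Ω)]
    (M N : ℕ) (hM : 0 < M) (hN : 0 < N)
    (X : Fin M → Fin N → Ω → ℝ)
    (hmeas : ∀ m n, Measurable (X m n))
    (hbdd : ∀ m n ω, X m n ω ∈ Set.Icc (0 : ℝ) 1)
    (hindep : ∀ m, iIndepFun (X m) ℙ)
    (hsum : ∀ n, ∑ m, ∫ ω, X m n ω ≤ 1) :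
    ∑ m, ∫ ω, |∑ n, (X m n ω - ∫ ω', X m n ω')| ≤ Real.sqrt (M * N) := by
  classical
  have hmem : ∀ m n, MemLp (X m n) 2 ℙ := fun m n =>
    MemLp.of_bound (hmeas m n).aestronglyMeasurable 1 (ae_of_all _ fun ω => by
      have h := hbdd m n ω
      rw [Real.norm_eq_abs, abs_le]; exact ⟨by linarith [h.1], h.2⟩)
  have hint : ∀ m n, Integrable (X m n) := fun m n => (hmem m n).integrable one_le_two
  set c : Fin M → Fin N → ℝ := fun m n => ∫ ω, X m n ω with hc
  have hcnonneg : ∀ m n, 0 ≤ c m n := fun m n =>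
    integral_nonneg fun ω => (hbdd m n ω).1
  set a : Fin M → ℝ := fun m => ∑ n, c m n with ha
  have hanonneg : ∀ m, 0 ≤ a m := fun m => Finset.sum_nonneg fun n _ => hcnonneg m n
  -- per-m bound
  have key : ∀ m, ∫ ω, |∑ n, (X m n ω - ∫ ω', X m n ω')| ≤ Real.sqrt (a m) := by
    intro m
    set T : Ω → ℝ := ∑ n, X m n with hT
    have hTfun : ∀ ω, T ω = ∑ n, X m n ω := fun ω => by simp [hT]
    have hTmem : MemLp T 2 ℙ := memLp_finset_sum' _ fun n _ => hmem m n
    have hET : ∫ ω, T ω = ∑ n, c m n := by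
      simp only [hTfun]
      exact integral_finset_sum _ fun n _ => hint m n
    have hvar : variance T ℙ = ∑ n, variance (X m n) ℙ :=
      IndepFun.variance_sum (fun n _ => hmem m n)
        (fun i _ j _ hij => (hindep m).indepFun hij)
    have hvle : ∀ n, variance (X m n) ℙ ≤ c m n := by
      intro n
      refine le_trans (variance_le_expectation_sq (hmeas m n).aestronglyMeasurable) ?_
      refine le_trans (le_of_eq ?_) (integral_mono ((hmem m n).integrable_sq) (hint m n)
        fun ω => ?_)
      · rfl
      · have h := hbdd m n ω
        simpa [pow_two] using mul_le_of_le_one_left h.1 h.2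
    have hZeq : ∀ ω, ∑ n, (X m n ω - ∫ ω', X m n ω') = T ω - ∫ ω', T ω' := by
      intro ω
      rw [Finset.sum_sub_distrib, hTfun, hET]
    calc ∫ ω, |∑ n, (X m n ω - ∫ ω', X m n ω')| = ∫ ω, |T ω - ∫ ω', T ω'| := by
          refine integral_congr_ae (ae_of_all _ fun ω => ?_); simp only []; rw [hZeq]
      _ ≤ Real.sqrt (∫ ω, (T ω - ∫ ω', T ω') ^ 2) :=
          my_abs_int_le _ (hTmem.sub (memLp_const _))
      _ = Real.sqrt (variance T ℙ) := by
          rw [variance_eq_integral hTmem.aestronglyMeasurable.aemeasurable]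
      _ ≤ Real.sqrt (a m) := by
          apply Real.sqrt_le_sqrt
          rw [hvar]
          exact Finset.sum_le_sum fun n _ => hvle n
  have hsum_a : ∑ m, a m ≤ (N : ℝ) := by
    rw [ha, Finset.sum_comm]
    calc ∑ n : Fin N, ∑ m, c m n ≤ ∑ n : Fin N, (1 : ℝ) :=
          Finset.sum_le_sum fun n _ => hsum n
      _ = N := by simp
  calc ∑ m, ∫ ω, |∑ n, (X m n ω - ∫ ω', X m n ω')| ≤ ∑ m, Real.sqrt (a m) :=
        Finset.sum_le_sum fun m _ => key m
    _ = Real.sqrt ((∑ m, Real.sqrt (a m)) ^ 2) := by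
        rw [Real.sqrt_sq (Finset.sum_nonneg fun m _ => Real.sqrt_nonneg _)]
    _ ≤ Real.sqrt (M * N) := by
        apply Real.sqrt_le_sqrt
        calc (∑ m, Real.sqrt (a m)) ^ 2 ≤ (Finset.univ.card : ℝ) * ∑ m, Real.sqrt (a m) ^ 2 :=
              sq_sum_le_card_mul_sum_sq
          _ = (M : ℝ) * ∑ m, a m := by
              simp only [Finset.card_univ, Fintype.card_fin]
              congr 1
              exact Finset.sum_congr rfl fun m _ => Real.sq_sqrt (hanonneg m)
          _ ≤ (M : ℝ) * N := by
              exact mul_le_mul_of_nonneg_left hsum_a (Nat.cast_nonneg _)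
end

section
/- Under the Lipschitz assumptions on the transition kernel P (Lipschitz constant L_P in the (mu, nu) arguments with respect to L1 distance) and on the policy pi (Lipschitz constant L_Q in mu), the mean-field transition map P^MF(mu, pi)(y) := sum_{x,u} P(x,u,mu,nu^MF(mu,pi))(y) pi(x,mu)(u) mu(x) satisfies |P^MF(mu1, pi) - P^MF(mu2, pi)|_1 <= S_P |mu1 - mu2|_1 where S_P = 1 + 2 L_P + L_Q (1 + L_P). -/
open Finset

/-- Lipschitz continuity of the mean-field transition map
`P^MF(μ,π)(y) = ∑_{x,u} P(x,u,μ,ν^MF(μ,π))(y) π(x,μ)(u) μ(x)` with constant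
`S_P = 1 + 2 L_P + L_Q (1 + L_P)`. -/
theorem stmt_2 {X U : Type*} [Fintype X] [Fintype U]
    (P : X → U → (X → ℝ) → (U → ℝ) → (X → ℝ))
    (π : X → (X → ℝ) → (U → ℝ)) (L_P L_Q : ℝ)
    (hPprob : ∀ x u (μ : X → ℝ) (ν : U → ℝ),
      (∀ y, 0 ≤ P x u μ ν y) ∧ ∑ y, P x u μ ν y = 1)
    (hPLip : ∀ x u (μ₁ μ₂ : X → ℝ) (ν₁ ν₂ : U → ℝ),
      ∑ y, |P x u μ₁ ν₁ y - P x u μ₂ ν₂ y|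
        ≤ L_P * ((∑ x', |μ₁ x' - μ₂ x'|) + ∑ u', |ν₁ u' - ν₂ u'|))
    (hπprob : ∀ x (μ : X → ℝ), (∀ u, 0 ≤ π x μ u) ∧ ∑ u, π x μ u = 1)
    (hπLip : ∀ x (μ₁ μ₂ : X → ℝ),
      ∑ u, |π x μ₁ u - π x μ₂ u| ≤ L_Q * ∑ x', |μ₁ x' - μ₂ x'|)
    (μ₁ μ₂ : X → ℝ)
    (hμ₁ : (∀ x, 0 ≤ μ₁ x) ∧ ∑ x, μ₁ x = 1)
    (hμ₂ : (∀ x, 0 ≤ μ₂ x) ∧ ∑ x, μ₂ x = 1) :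
    ∑ y, |(∑ x, ∑ u, P x u μ₁ (fun u' => ∑ x', π x' μ₁ u' * μ₁ x') y * π x μ₁ u * μ₁ x)
        - ∑ x, ∑ u, P x u μ₂ (fun u' => ∑ x', π x' μ₂ u' * μ₂ x') y * π x μ₂ u * μ₂ x|
      ≤ (1 + 2 * L_P + L_Q * (1 + L_P)) * ∑ x, |μ₁ x - μ₂ x| := by
  obtain ⟨hμ₁pos, hμ₁sum⟩ := hμ₁
  obtain ⟨hμ₂pos, hμ₂sum⟩ := hμ₂
  set Δ := ∑ x, |μ₁ x - μ₂ x| with hΔdef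
  have hΔ0 : 0 ≤ Δ := Finset.sum_nonneg fun x _ => abs_nonneg _
  have hXne : Nonempty X := by
    rcases isEmpty_or_nonempty X with h | h
    · rw [Finset.univ_eq_empty, Finset.sum_empty] at hμ₁sum; norm_num at hμ₁sum
    · exact h
  have hUne : Nonempty U := by
    rcases isEmpty_or_nonempty U with h | h
    · have := (hπprob (Classical.arbitrary X) μ₁).2
      rw [Finset.univ_eq_empty, Finset.sum_empty] at this; norm_num at this
    · exact h
  have hLP : 0 ≤ L_P := by
    have h := hPLip (Classical.arbitrary X) (Classical.arbitrary U) μ₁ μ₁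
      (fun _ => 1) (fun _ => 0)
    have h0 : (0:ℝ) ≤ ∑ y, |P (Classical.arbitrary X) (Classical.arbitrary U) μ₁
        (fun _ => 1) y - P (Classical.arbitrary X) (Classical.arbitrary U) μ₁ (fun _ => 0) y| :=
      Finset.sum_nonneg fun y _ => abs_nonneg _
    simp only [sub_self, abs_zero, Finset.sum_const_zero, sub_zero, abs_one,
      Finset.sum_const, nsmul_eq_mul, mul_one, zero_add] at h
    have hcard : (0:ℝ) < ((Finset.univ : Finset U).card : ℝ) := by
      rw [Finset.card_univ]; exact_mod_cast Fintype.card_pos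
    nlinarith [le_trans h0 h]
  have hLQ : 0 ≤ L_Q := by
    have h := hπLip (Classical.arbitrary X) (fun _ => 1) (fun _ => 0)
    have h0 : (0:ℝ) ≤ ∑ u, |π (Classical.arbitrary X) (fun _ => 1) u -
        π (Classical.arbitrary X) (fun _ => 0) u| :=
      Finset.sum_nonneg fun u _ => abs_nonneg _
    simp only [sub_zero, abs_one, Finset.sum_const, nsmul_eq_mul, mul_one] at h
    have hcard : (0:ℝ) < ((Finset.univ : Finset X).card : ℝ) := by
      rw [Finset.card_univ]; exact_mod_cast Fintype.card_pos
    nlinarith [le_trans h0 h]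
  set ν₁ : U → ℝ := fun u' => ∑ x', π x' μ₁ u' * μ₁ x' with hν₁def
  set ν₂ : U → ℝ := fun u' => ∑ x', π x' μ₂ u' * μ₂ x' with hν₂def
  -- Step 1: |ν₁ - ν₂|₁ ≤ (1 + L_Q) Δ
  have hν : ∑ u, |ν₁ u - ν₂ u| ≤ (1 + L_Q) * Δ := by
    have step : ∑ u, |ν₁ u - ν₂ u|
        ≤ ∑ u, ∑ x, (π x μ₁ u * |μ₁ x - μ₂ x| + μ₂ x * |π x μ₁ u - π x μ₂ u|) := by
      apply Finset.sum_le_sum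
      intro u _
      calc |ν₁ u - ν₂ u| = |∑ x, (π x μ₁ u * μ₁ x - π x μ₂ u * μ₂ x)| := by
            simp only [hν₁def, hν₂def, Finset.sum_sub_distrib]
        _ ≤ ∑ x, |π x μ₁ u * μ₁ x - π x μ₂ u * μ₂ x| := Finset.abs_sum_le_sum_abs _ _
        _ ≤ ∑ x, (π x μ₁ u * |μ₁ x - μ₂ x| + μ₂ x * |π x μ₁ u - π x μ₂ u|) := by
            apply Finset.sum_le_sum
            intro x _
            have heq : π x μ₁ u * μ₁ x - π x μ₂ u * μ₂ x
                = π x μ₁ u * (μ₁ x - μ₂ x) + (π x μ₁ u - π x μ₂ u) * μ₂ x := by ring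
            rw [heq]
            refine le_trans (abs_add_le _ _) ?_
            rw [abs_mul, abs_mul, abs_of_nonneg ((hπprob x μ₁).1 u),
              abs_of_nonneg (hμ₂pos x), mul_comm |π x μ₁ u - π x μ₂ u| (μ₂ x)]
    rw [Finset.sum_comm] at step
    calc ∑ u, |ν₁ u - ν₂ u|
        ≤ ∑ x, ∑ u, (π x μ₁ u * |μ₁ x - μ₂ x| + μ₂ x * |π x μ₁ u - π x μ₂ u|) := step
      _ = ∑ x, (|μ₁ x - μ₂ x| + μ₂ x * ∑ u, |π x μ₁ u - π x μ₂ u|) := by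
          apply Finset.sum_congr rfl
          intro x _
          rw [Finset.sum_add_distrib, ← Finset.sum_mul, (hπprob x μ₁).2, one_mul,
            ← Finset.mul_sum]
      _ ≤ ∑ x, (|μ₁ x - μ₂ x| + μ₂ x * (L_Q * Δ)) := by
          apply Finset.sum_le_sum
          intro x _
          have := hπLip x μ₁ μ₂
          nlinarith [hμ₂pos x]
      _ = Δ + (L_Q * Δ) := by
          rw [Finset.sum_add_distrib, ← Finset.sum_mul, hμ₂sum, one_mul, ← hΔdef]
      _ = (1 + L_Q) * Δ := by ring
  -- Step 2: bound on ∑_y |P(x,u,μ₁,ν₁)(y) - P(x,u,μ₂,ν₂)(y)|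
  have hPd : ∀ x u, ∑ y, |P x u μ₁ ν₁ y - P x u μ₂ ν₂ y| ≤ L_P * (2 + L_Q) * Δ := by
    intro x u
    calc ∑ y, |P x u μ₁ ν₁ y - P x u μ₂ ν₂ y|
        ≤ L_P * (Δ + ∑ u', |ν₁ u' - ν₂ u'|) := hPLip x u μ₁ μ₂ ν₁ ν₂
      _ ≤ L_P * (Δ + (1 + L_Q) * Δ) := by nlinarith
      _ = L_P * (2 + L_Q) * Δ := by ring
  -- Step 3: pointwise decomposition
  have key : ∀ y x u, |P x u μ₁ ν₁ y * π x μ₁ u * μ₁ x - P x u μ₂ ν₂ y * π x μ₂ u * μ₂ x|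
      ≤ |P x u μ₁ ν₁ y - P x u μ₂ ν₂ y| * (π x μ₁ u * μ₁ x)
        + P x u μ₂ ν₂ y * (|π x μ₁ u - π x μ₂ u| * μ₁ x)
        + P x u μ₂ ν₂ y * (π x μ₂ u * |μ₁ x - μ₂ x|) := by
    intro y x u
    have heq : P x u μ₁ ν₁ y * π x μ₁ u * μ₁ x - P x u μ₂ ν₂ y * π x μ₂ u * μ₂ x
        = (P x u μ₁ ν₁ y - P x u μ₂ ν₂ y) * (π x μ₁ u * μ₁ x)
          + P x u μ₂ ν₂ y * ((π x μ₁ u - π x μ₂ u) * μ₁ x)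
          + P x u μ₂ ν₂ y * (π x μ₂ u * (μ₁ x - μ₂ x)) := by ring
    rw [heq]
    refine le_trans (abs_add_three _ _ _) ?_
    apply le_of_eq
    rw [abs_mul, abs_mul, abs_mul, abs_mul, abs_mul, abs_mul,
      abs_of_nonneg ((hπprob x μ₁).1 u), abs_of_nonneg (hμ₁pos x),
      abs_of_nonneg ((hPprob x u μ₂ ν₂).1 y), abs_of_nonneg ((hπprob x μ₂).1 u)]
  -- Step 4: main estimate
  calc ∑ y, |(∑ x, ∑ u, P x u μ₁ ν₁ y * π x μ₁ u * μ₁ x)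
        - ∑ x, ∑ u, P x u μ₂ ν₂ y * π x μ₂ u * μ₂ x|
      ≤ ∑ y, ∑ x, ∑ u, (|P x u μ₁ ν₁ y - P x u μ₂ ν₂ y| * (π x μ₁ u * μ₁ x)
          + P x u μ₂ ν₂ y * (|π x μ₁ u - π x μ₂ u| * μ₁ x)
          + P x u μ₂ ν₂ y * (π x μ₂ u * |μ₁ x - μ₂ x|)) := by
        apply Finset.sum_le_sum; intro y _
        rw [← Finset.sum_sub_distrib]
        refine le_trans (Finset.abs_sum_le_sum_abs _ _) ?_
        apply Finset.sum_le_sum; intro x _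
        rw [← Finset.sum_sub_distrib]
        refine le_trans (Finset.abs_sum_le_sum_abs _ _) ?_
        exact Finset.sum_le_sum fun u _ => key y x u
    _ = ∑ x, ∑ u, ((∑ y, |P x u μ₁ ν₁ y - P x u μ₂ ν₂ y|) * (π x μ₁ u * μ₁ x)
          + |π x μ₁ u - π x μ₂ u| * μ₁ x
          + π x μ₂ u * |μ₁ x - μ₂ x|) := by
        rw [Finset.sum_comm]
        refine Finset.sum_congr rfl fun x _ => ?_
        rw [Finset.sum_comm]
        refine Finset.sum_congr rfl fun u _ => ?_
        rw [Finset.sum_add_distrib, Finset.sum_add_distrib, ← Finset.sum_mul,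
          ← Finset.sum_mul, ← Finset.sum_mul, (hPprob x u μ₂ ν₂).2, one_mul, one_mul]
    _ ≤ ∑ x, ∑ u, ((L_P * (2 + L_Q) * Δ) * (π x μ₁ u * μ₁ x)
          + |π x μ₁ u - π x μ₂ u| * μ₁ x
          + π x μ₂ u * |μ₁ x - μ₂ x|) := by
        refine Finset.sum_le_sum fun x _ => Finset.sum_le_sum fun u _ => ?_
        have h1 := hPd x u
        have h2 : 0 ≤ π x μ₁ u * μ₁ x := mul_nonneg ((hπprob x μ₁).1 u) (hμ₁pos x)
        have := mul_le_mul_of_nonneg_right h1 h2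
        linarith
    _ = (L_P * (2 + L_Q) * Δ) + (∑ x, μ₁ x * ∑ u, |π x μ₁ u - π x μ₂ u|) + Δ := by
        rw [Finset.sum_congr rfl (fun x (_ : x ∈ Finset.univ) => Finset.sum_add_distrib),
          Finset.sum_add_distrib]
        congr 1
        · congr 1
          · have : ∀ x ∈ Finset.univ, (∑ u, ((L_P * (2 + L_Q) * Δ) * (π x μ₁ u * μ₁ x)
                + |π x μ₁ u - π x μ₂ u| * μ₁ x))
                = (L_P * (2 + L_Q) * Δ) * μ₁ x + μ₁ x * ∑ u, |π x μ₁ u - π x μ₂ u| := by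
              intro x _
              have e1 : ∑ u, (L_P * (2 + L_Q) * Δ) * (π x μ₁ u * μ₁ x)
                  = (L_P * (2 + L_Q) * Δ) * μ₁ x := by
                rw [← Finset.mul_sum, ← Finset.sum_mul, (hπprob x μ₁).2, one_mul]
              have e2 : ∑ u, |π x μ₁ u - π x μ₂ u| * μ₁ x
                  = μ₁ x * ∑ u, |π x μ₁ u - π x μ₂ u| := by
                rw [← Finset.sum_mul, mul_comm]
              rw [Finset.sum_add_distrib, e1, e2]
            rw [Finset.sum_congr rfl this, Finset.sum_add_distrib, ← Finset.mul_sum,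
              hμ₁sum, mul_one]
        · have : ∀ x ∈ Finset.univ, (∑ u, π x μ₂ u * |μ₁ x - μ₂ x|) = |μ₁ x - μ₂ x| := by
            intro x _
            rw [← Finset.sum_mul, (hπprob x μ₂).2, one_mul]
          rw [Finset.sum_congr rfl this, ← hΔdef]
    _ ≤ (L_P * (2 + L_Q) * Δ) + L_Q * Δ + Δ := by
        have : ∑ x, μ₁ x * ∑ u, |π x μ₁ u - π x μ₂ u| ≤ ∑ x, μ₁ x * (L_Q * Δ) := by
          refine Finset.sum_le_sum fun x _ => ?_
          exact mul_le_mul_of_nonneg_left (hπLip x μ₁ μ₂) (hμ₁pos x)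
        rw [← Finset.sum_mul, hμ₁sum, one_mul] at this
        linarith
    _ = (1 + 2 * L_P + L_Q * (1 + L_P)) * Δ := by ring
end

section
/- If the reward function r is bounded by M_R and Lipschitz with constant L_R in the (mu, nu) arguments (L1 distance), and the policy pi is L_Q-Lipschitz in mu, then the mean-field reward r^MF(mu, pi) := sum_{x,u} r(x,u,mu,nu^MF(mu,pi)) pi(x,mu)(u) mu(x) satisfies |r^MF(mu1, pi) - r^MF(mu2, pi)| <= S_R |mu1 - mu2|_1 where S_R = M_R + 2 L_R + L_Q (M_R + L_R). -/
open Finset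

/-- Lipschitz continuity of the mean-field reward
`r^MF(μ,π) = ∑_{x,u} r(x,u,μ,ν^MF(μ,π)) π(x,μ)(u) μ(x)` with constant
`S_R = M_R + 2 L_R + L_Q (M_R + L_R)`. -/
theorem stmt_3 {X U : Type*} [Fintype X] [Fintype U]
    (r : X → U → (X → ℝ) → (U → ℝ) → ℝ)
    (π : X → (X → ℝ) → (U → ℝ)) (M_R L_R L_Q : ℝ)
    (hrbdd : ∀ x u (μ : X → ℝ) (ν : U → ℝ), |r x u μ ν| ≤ M_R)
    (hrLip : ∀ x u (μ₁ μ₂ : X → ℝ) (ν₁ ν₂ : U → ℝ),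
      |r x u μ₁ ν₁ - r x u μ₂ ν₂|
        ≤ L_R * ((∑ x', |μ₁ x' - μ₂ x'|) + ∑ u', |ν₁ u' - ν₂ u'|))
    (hπprob : ∀ x (μ : X → ℝ), (∀ u, 0 ≤ π x μ u) ∧ ∑ u, π x μ u = 1)
    (hπLip : ∀ x (μ₁ μ₂ : X → ℝ),
      ∑ u, |π x μ₁ u - π x μ₂ u| ≤ L_Q * ∑ x', |μ₁ x' - μ₂ x'|)
    (μ₁ μ₂ : X → ℝ)
    (hμ₁ : (∀ x, 0 ≤ μ₁ x) ∧ ∑ x, μ₁ x = 1)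
    (hμ₂ : (∀ x, 0 ≤ μ₂ x) ∧ ∑ x, μ₂ x = 1) :
    |(∑ x, ∑ u, r x u μ₁ (fun u' => ∑ x', π x' μ₁ u' * μ₁ x') * π x μ₁ u * μ₁ x)
        - ∑ x, ∑ u, r x u μ₂ (fun u' => ∑ x', π x' μ₂ u' * μ₂ x') * π x μ₂ u * μ₂ x|
      ≤ (M_R + 2 * L_R + L_Q * (M_R + L_R)) * ∑ x, |μ₁ x - μ₂ x| := by
  classical
  rcases isEmpty_or_nonempty X with hX | hX
  · simp
  obtain ⟨x₀⟩ := hX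
  have hU : Nonempty U := by
    by_contra h
    have h1 := (hπprob x₀ μ₁).2
    rw [not_nonempty_iff] at h
    simp at h1
  obtain ⟨u₀⟩ := hU
  set d := ∑ x, |μ₁ x - μ₂ x| with hdd
  have hd0 : 0 ≤ d := Finset.sum_nonneg fun _ _ => abs_nonneg _
  have hM0 : 0 ≤ M_R := le_trans (abs_nonneg _) (hrbdd x₀ u₀ μ₁ (fun _ => 0))
  have hLR0 : 0 ≤ L_R := by
    have h := hrLip x₀ u₀ μ₁ μ₁ (fun _ => 0) (fun u => if u = u₀ then 1 else 0)
    have h2 : ∑ u', |(fun _ => (0:ℝ)) u' - (fun u => if u = u₀ then (1:ℝ) else 0) u'| = 1 := by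
      simp [apply_ite abs, Finset.sum_ite_eq']
    rw [h2] at h
    simp at h
    nlinarith [abs_nonneg (r x₀ u₀ μ₁ (fun _ => 0) - r x₀ u₀ μ₁ (fun u => if u = u₀ then 1 else 0))]
  have hLQ0 : 0 ≤ L_Q := by
    have h := hπLip x₀ μ₁ (fun x => μ₁ x + if x = x₀ then 1 else 0)
    have h2 : ∑ x', |μ₁ x' - (fun x => μ₁ x + if x = x₀ then (1:ℝ) else 0) x'| = 1 := by
      simp [apply_ite abs, Finset.sum_ite_eq']
    rw [h2] at h
    have h3 : (0:ℝ) ≤ ∑ u, |π x₀ μ₁ u - π x₀ (fun x => μ₁ x + if x = x₀ then 1 else 0) u| :=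
      Finset.sum_nonneg fun _ _ => abs_nonneg _
    linarith
  set ν₁ : U → ℝ := fun u' => ∑ x', π x' μ₁ u' * μ₁ x' with hν₁
  set ν₂ : U → ℝ := fun u' => ∑ x', π x' μ₂ u' * μ₂ x' with hν₂
  -- bound on the combined π·μ difference
  have hB : ∑ x, ∑ u, |π x μ₁ u * μ₁ x - π x μ₂ u * μ₂ x| ≤ (L_Q + 1) * d := by
    have hx : ∀ x, ∑ u, |π x μ₁ u * μ₁ x - π x μ₂ u * μ₂ x|
        ≤ μ₁ x * (L_Q * d) + |μ₁ x - μ₂ x| := by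
      intro x
      have h1 : ∀ u, |π x μ₁ u * μ₁ x - π x μ₂ u * μ₂ x|
          ≤ |π x μ₁ u - π x μ₂ u| * μ₁ x + π x μ₂ u * |μ₁ x - μ₂ x| := by
        intro u
        have heq : π x μ₁ u * μ₁ x - π x μ₂ u * μ₂ x
            = (π x μ₁ u - π x μ₂ u) * μ₁ x + π x μ₂ u * (μ₁ x - μ₂ x) := by ring
        rw [heq]
        calc |(π x μ₁ u - π x μ₂ u) * μ₁ x + π x μ₂ u * (μ₁ x - μ₂ x)|
            ≤ |(π x μ₁ u - π x μ₂ u) * μ₁ x| + |π x μ₂ u * (μ₁ x - μ₂ x)| := abs_add_le _ _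
          _ = |π x μ₁ u - π x μ₂ u| * μ₁ x + π x μ₂ u * |μ₁ x - μ₂ x| := by
              rw [abs_mul, abs_mul, abs_of_nonneg (hμ₁.1 x),
                abs_of_nonneg ((hπprob x μ₂).1 u)]
      calc ∑ u, |π x μ₁ u * μ₁ x - π x μ₂ u * μ₂ x|
          ≤ ∑ u, (|π x μ₁ u - π x μ₂ u| * μ₁ x + π x μ₂ u * |μ₁ x - μ₂ x|) :=
            Finset.sum_le_sum fun u _ => h1 u
        _ = (∑ u, |π x μ₁ u - π x μ₂ u|) * μ₁ x + (∑ u, π x μ₂ u) * |μ₁ x - μ₂ x| := by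
            rw [Finset.sum_add_distrib, ← Finset.sum_mul, ← Finset.sum_mul]
        _ ≤ (L_Q * d) * μ₁ x + 1 * |μ₁ x - μ₂ x| := by
            rw [(hπprob x μ₂).2]
            exact add_le_add (mul_le_mul_of_nonneg_right (hπLip x μ₁ μ₂) (hμ₁.1 x)) le_rfl
        _ = μ₁ x * (L_Q * d) + |μ₁ x - μ₂ x| := by ring
    calc ∑ x, ∑ u, |π x μ₁ u * μ₁ x - π x μ₂ u * μ₂ x|
        ≤ ∑ x, (μ₁ x * (L_Q * d) + |μ₁ x - μ₂ x|) := Finset.sum_le_sum fun x _ => hx x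
      _ = (∑ x, μ₁ x) * (L_Q * d) + d := by
          rw [Finset.sum_add_distrib, ← Finset.sum_mul, hdd]
      _ = (L_Q + 1) * d := by rw [hμ₁.2]; ring
  have hν : ∑ u, |ν₁ u - ν₂ u| ≤ (L_Q + 1) * d := by
    calc ∑ u, |ν₁ u - ν₂ u|
        = ∑ u, |∑ x, (π x μ₁ u * μ₁ x - π x μ₂ u * μ₂ x)| := by
          simp [hν₁, hν₂, Finset.sum_sub_distrib]
      _ ≤ ∑ u, ∑ x, |π x μ₁ u * μ₁ x - π x μ₂ u * μ₂ x| :=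
          Finset.sum_le_sum fun u _ => Finset.abs_sum_le_sum_abs _ _
      _ = ∑ x, ∑ u, |π x μ₁ u * μ₁ x - π x μ₂ u * μ₂ x| := Finset.sum_comm
      _ ≤ (L_Q + 1) * d := hB
  have hterm : ∀ x u,
      |r x u μ₁ ν₁ * π x μ₁ u * μ₁ x - r x u μ₂ ν₂ * π x μ₂ u * μ₂ x|
        ≤ (L_R * (d + (L_Q + 1) * d)) * (π x μ₁ u * μ₁ x)
          + M_R * |π x μ₁ u * μ₁ x - π x μ₂ u * μ₂ x| := by
    intro x u
    have heq : r x u μ₁ ν₁ * π x μ₁ u * μ₁ x - r x u μ₂ ν₂ * π x μ₂ u * μ₂ x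
        = (r x u μ₁ ν₁ - r x u μ₂ ν₂) * (π x μ₁ u * μ₁ x)
          + r x u μ₂ ν₂ * (π x μ₁ u * μ₁ x - π x μ₂ u * μ₂ x) := by ring
    rw [heq]
    refine (abs_add_le _ _).trans (add_le_add ?_ ?_)
    · rw [abs_mul, abs_of_nonneg (mul_nonneg ((hπprob x μ₁).1 u) (hμ₁.1 x))]
      refine mul_le_mul_of_nonneg_right ?_ (mul_nonneg ((hπprob x μ₁).1 u) (hμ₁.1 x))
      refine (hrLip x u μ₁ μ₂ ν₁ ν₂).trans ?_
      exact mul_le_mul_of_nonneg_left (add_le_add le_rfl hν) hLR0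
    · rw [abs_mul]
      exact mul_le_mul_of_nonneg_right (hrbdd x u μ₂ ν₂) (abs_nonneg _)
  have hone : ∑ x, ∑ u, π x μ₁ u * μ₁ x = 1 := by
    have : ∀ x, ∑ u, π x μ₁ u * μ₁ x = μ₁ x := by
      intro x
      rw [← Finset.sum_mul, (hπprob x μ₁).2, one_mul]
    rw [Finset.sum_congr rfl fun x _ => this x, hμ₁.2]
  calc |(∑ x, ∑ u, r x u μ₁ ν₁ * π x μ₁ u * μ₁ x)
        - ∑ x, ∑ u, r x u μ₂ ν₂ * π x μ₂ u * μ₂ x|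
      = |∑ x, ∑ u, (r x u μ₁ ν₁ * π x μ₁ u * μ₁ x - r x u μ₂ ν₂ * π x μ₂ u * μ₂ x)| := by
        rw [← Finset.sum_sub_distrib]
        congr 1
        exact Finset.sum_congr rfl fun x _ => (Finset.sum_sub_distrib _ _).symm
    _ ≤ ∑ x, ∑ u, |r x u μ₁ ν₁ * π x μ₁ u * μ₁ x - r x u μ₂ ν₂ * π x μ₂ u * μ₂ x| :=
        (Finset.abs_sum_le_sum_abs _ _).trans
          (Finset.sum_le_sum fun x _ => Finset.abs_sum_le_sum_abs _ _)
    _ ≤ ∑ x, ∑ u, ((L_R * (d + (L_Q + 1) * d)) * (π x μ₁ u * μ₁ x)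
          + M_R * |π x μ₁ u * μ₁ x - π x μ₂ u * μ₂ x|) :=
        Finset.sum_le_sum fun x _ => Finset.sum_le_sum fun u _ => hterm x u
    _ = (L_R * (d + (L_Q + 1) * d)) * (∑ x, ∑ u, π x μ₁ u * μ₁ x)
          + M_R * ∑ x, ∑ u, |π x μ₁ u * μ₁ x - π x μ₂ u * μ₂ x| := by
        simp [Finset.sum_add_distrib, Finset.mul_sum]
    _ ≤ (L_R * (d + (L_Q + 1) * d)) * 1 + M_R * ((L_Q + 1) * d) := by
        rw [hone]
        exact add_le_add le_rfl (mul_le_mul_of_nonneg_left hB hM0)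
    _ = (M_R + 2 * L_R + L_Q * (M_R + L_R)) * d := by ring
end
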